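/- Let ē₁ = χξ(2L_f F Δ̄₁ + η̄) be the offline tracking error bound and ē₂ = 2χ(F + F_d + ξL_f F)Δ̄₂ + χξη̲ the best online bound, with constants χ, ξ, L_f, F, F_d > 0, η̄ ≥ η̲ ≥ 0, and Δ̄₁ ≤ Δ̄₂. Then ē₁ ≤ ē₂ holds if either Δ̄₂ ≥ ξ(η̄ - η̲)/(2(F + F_d)) or Δ̄₂ - Δ̄₁ ≥ (ξ(η̄ - η̲) - 2(F + F_d)Δ̄₁)/(2(ξL_f F + F + F_d)). -/
import Mathlib


/-- Offline vs. online learning trade-off (Corollary 3): if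
`Δ̄₂ ≥ ξη̃/(2(F+F_d))` or `Δ̃ ≥ (ξη̃ - 2(F+F_d)Δ̄₁)/(2(ξL_fF + F + F_d))`,
then the offline bound `ē₁ = χξ(2L_fFΔ̄₁ + η̄)` does not exceed the online bound
`ē₂ = 2χ(F + F_d + ξL_fF)Δ̄₂ + χξη̲`. -/
theorem offline_vs_online_tradeoff
    (χ ξ Lf F Fd : ℝ) (hχ : 0 < χ) (hξ : 0 < ξ) (hLf : 0 < Lf)
    (hF : 0 < F) (hFd : 0 < Fd)
    (ηbar ηlow : ℝ) (hηlow : 0 ≤ ηlow) (hηord : ηlow ≤ ηbar)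
    (Δ₁ Δ₂ : ℝ) (hΔ₁ : 0 < Δ₁) (hΔord : Δ₁ ≤ Δ₂)
    (hcond : ξ * (ηbar - ηlow) / (2 * (F + Fd)) ≤ Δ₂ ∨
      (ξ * (ηbar - ηlow) - 2 * (F + Fd) * Δ₁) / (2 * (ξ * Lf * F + F + Fd)) ≤ Δ₂ - Δ₁) :
    χ * ξ * (2 * Lf * F * Δ₁ + ηbar)
      ≤ 2 * χ * (F + Fd + ξ * Lf * F) * Δ₂ + χ * ξ * ηlow := by
  rcases hcond with h | h
  · rw [div_le_iff₀ (by positivity)] at h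
    nlinarith [mul_pos hξ (mul_pos hLf hF), mul_le_mul_of_nonneg_left hΔord (le_of_lt (mul_pos hξ (mul_pos hLf hF)))]
  · rw [div_le_iff₀ (by positivity)] at h
    nlinarith
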